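/- Let A, B be positive definite n×n complex matrices. Suppose there is a faithful positive tracial linear functional τ (e.g., the trace) with τ(((A^{1/2}+B^{1/2})/2)^2) = τ((1/4)(A + B + A(A^{-1}#B) + (A^{-1}#B)A)). Then AB = BA. -/

import Mathlib

/-!
With `a = A^{1/2}` and `b = B^{1/2}` we have `A⁻¹ # B = a⁻¹ C a⁻¹` for `C = (a B a)^{1/2}`,
so the trace identity says `τ(a b) = τ(C)`. Since `(a b)(a b)ᴴ = a B a = C²`, this is the
equality case of the Cauchy–Schwarz inequality `Re τ(Y) ≤ τ((Y Yᴴ)^{1/2})`, which forces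
`a b = C`. Thus `a b` is Hermitian, i.e. `a` and `b` commute, and hence so do `A = a²`
and `B = b²`.
-/

open Matrix
open scoped ComplexOrder

open Classical in
/-- The positive square root of a positive semidefinite matrix (junk value `0` otherwise). -/
noncomputable def msqrt {n : Type*} [Fintype n] [DecidableEq n] (A : Matrix n n ℂ) :
    Matrix n n ℂ :=
  if h : A.PosSemidef then
    (h.1.eigenvectorUnitary : Matrix n n ℂ) * diagonal ((↑) ∘ (√·) ∘ h.1.eigenvalues) *
      (star h.1.eigenvectorUnitary : Matrix n n ℂ)
  else 0

/-- The geometric mean `P # Q = P^{1/2} (P^{-1/2} Q P^{-1/2})^{1/2} P^{1/2}`. -/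
noncomputable def geoMean {n : Type*} [Fintype n] [DecidableEq n] (P Q : Matrix n n ℂ) :
    Matrix n n ℂ :=
  msqrt P * msqrt ((msqrt P)⁻¹ * Q * (msqrt P)⁻¹) * msqrt P

open scoped MatrixOrder

namespace Matrix

variable {n : Type*} [Fintype n] [DecidableEq n]

lemma trace_add_sq {R : Type*} [CommRing R] (x y : Matrix n n R) :
    ((x + y) ^ 2).trace = (x * x).trace + (y * y).trace + 2 * (x * y).trace := by
  rw [sq, add_mul, mul_add, mul_add, trace_add, trace_add, trace_add, trace_mul_comm y x]
  ring

lemma cfcSqrt_inv {𝕜 : Type*} [RCLike 𝕜] (A : Matrix n n 𝕜) :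
    CFC.sqrt A⁻¹ = (CFC.sqrt A)⁻¹ := by
  simp only [nonsing_inv_eq_ringInverse, CFC.sqrt_ringInverse]

theorem PosDef.eq_of_mul_conjTranspose_eq_mul_self_of_trace_eq {𝕜 : Type*} [RCLike 𝕜]
    {C Y : Matrix n n 𝕜} (hC : C.PosDef) (hYC : Y * Yᴴ = C * C) (htr : Y.trace = C.trace) :
    Y = C := by
  -- With `C = sᴴ s`, the squared Frobenius norm of `(sᴴ)⁻¹ Y - s` is
  -- `τ(C⁻¹ Y Yᴴ) - τ(Yᴴ) - τ(Y) + τ(C) = τ(C) - τ(C) - τ(C) + τ(C) = 0`.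
  obtain ⟨s, hs, hCs⟩ :=
    CStarAlgebra.isStrictlyPositive_iff_eq_star_mul_self.mp hC.isStrictlyPositive
  rw [star_eq_conjTranspose] at hCs
  have hsd := (isUnit_iff_isUnit_det _).mp hs
  have hsd' : IsUnit sᴴ.det := by rw [det_conjTranspose]; exact hsd.star
  have hCd : IsUnit C.det := (isUnit_iff_isUnit_det _).mp hC.isUnit
  have hexpand :
      ((sᴴ)⁻¹ * Y - s)ᴴ * ((sᴴ)⁻¹ * Y - s) = Yᴴ * C⁻¹ * Y - Yᴴ - Y + C := by
    subst hCs
    rw [conjTranspose_sub, conjTranspose_mul, conjTranspose_nonsing_inv,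
      conjTranspose_conjTranspose, mul_inv_rev]
    simp only [sub_mul, mul_sub, mul_assoc,
      mul_nonsing_inv_cancel_left _ _ hsd', nonsing_inv_mul _ hsd, mul_one]
    abel
  have hE : (((sᴴ)⁻¹ * Y - s)ᴴ * ((sᴴ)⁻¹ * Y - s)).trace = 0 := by
    rw [hexpand, trace_add, trace_sub, trace_sub, trace_mul_cycle, hYC,
      mul_nonsing_inv_cancel_right _ _ hCd, trace_conjTranspose, htr, ← trace_conjTranspose,
      hC.1.eq]
    ring
  have hE0 := trace_conjTranspose_mul_self_eq_zero_iff.mp hE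
  rw [sub_eq_zero] at hE0
  rw [← mul_nonsing_inv_cancel_left _ Y hsd', hE0, hCs]

end Matrix

section

variable {n : Type*} [Fintype n] [DecidableEq n]

lemma msqrt_eq_cfcSqrt (A : Matrix n n ℂ) : msqrt A = CFC.sqrt A := by
  by_cases hA : A.PosSemidef
  · rw [msqrt, dif_pos hA, CFC.sqrt_eq_cfc, cfc_nnreal_eq_real _ A hA.nonneg, hA.1.cfc_eq]
    simp only [IsHermitian.cfc, Unitary.conjStarAlgAut_apply]
    congr 3
    funext i
    simp [max_eq_left (hA.eigenvalues_nonneg i)]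
  · rw [msqrt, dif_neg hA, CFC.sqrt_of_not_nonneg (mt LE.le.posSemidef hA)]

lemma geoMean_inv_left {A : Matrix n n ℂ} (hA : A.PosDef) (B : Matrix n n ℂ) :
    geoMean A⁻¹ B =
      (CFC.sqrt A)⁻¹ * CFC.sqrt (CFC.sqrt A * B * CFC.sqrt A) * (CFC.sqrt A)⁻¹ := by
  have := hA.isStrictlyPositive.isUnit_cfcSqrt
  rw [geoMean, msqrt_eq_cfcSqrt, msqrt_eq_cfcSqrt, cfcSqrt_inv,
    nonsing_inv_nonsing_inv _ ((isUnit_iff_isUnit_det _).mp this)]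

lemma trace_mul_geoMean_inv_left {A : Matrix n n ℂ} (hA : A.PosDef) (B : Matrix n n ℂ) :
    (A * geoMean A⁻¹ B).trace = (CFC.sqrt (CFC.sqrt A * B * CFC.sqrt A)).trace := by
  have ha := (isUnit_iff_isUnit_det _).mp hA.isStrictlyPositive.isUnit_cfcSqrt
  set a := CFC.sqrt A
  set C := CFC.sqrt (a * B * a)
  have hAa : A = a * a := (CFC.sqrt_mul_sqrt_self A hA.posSemidef.nonneg).symm
  calc (A * geoMean A⁻¹ B).trace = (a * a * (a⁻¹ * C * a⁻¹)).trace := by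
        rw [geoMean_inv_left hA, ← hAa]
    _ = (a * C * a⁻¹).trace := by simp only [mul_assoc, mul_nonsing_inv_cancel_left _ _ ha]
    _ = C.trace := by rw [trace_mul_cycle, nonsing_inv_mul _ ha, one_mul]

end

theorem stmt15 {n : Type*} [Fintype n] [DecidableEq n] (A B : Matrix n n ℂ)
    (hA : A.PosDef) (hB : B.PosDef)
    (h : (((1 / 2 : ℂ) • (msqrt A + msqrt B)) ^ 2).trace =
      ((1 / 4 : ℂ) • (A + B + A * geoMean A⁻¹ B + geoMean A⁻¹ B * A)).trace) :
    A * B = B * A := by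
  have haa : CFC.sqrt A * CFC.sqrt A = A := CFC.sqrt_mul_sqrt_self A hA.posSemidef.nonneg
  have hbb : CFC.sqrt B * CFC.sqrt B = B := CFC.sqrt_mul_sqrt_self B hB.posSemidef.nonneg
  have ha := hA.isStrictlyPositive.sqrt.posDef
  have hb := hB.isStrictlyPositive.sqrt.posDef
  set a := CFC.sqrt A
  set b := CFC.sqrt B
  have hM : (a * B * a).PosDef := by
    simpa only [ha.1.eq] using
      hB.conjTranspose_mul_mul_same (mulVec_injective_iff_isUnit.mpr ha.isUnit)
  have hC := hM.isStrictlyPositive.sqrt.posDef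
  set C := CFC.sqrt (a * B * a)
  have htr : (a * b).trace = C.trace := by
    rw [msqrt_eq_cfcSqrt, msqrt_eq_cfcSqrt, trace_smul, trace_add, trace_add, trace_add,
      trace_mul_geoMean_inv_left hA, trace_mul_comm, trace_mul_geoMean_inv_left hA, smul_pow,
      trace_smul, trace_add_sq, haa, hbb, smul_eq_mul, smul_eq_mul] at h
    linear_combination 2 * h
  have hYC : (a * b) * (a * b)ᴴ = C * C := by
    rw [CFC.sqrt_mul_sqrt_self _ hM.posSemidef.nonneg, conjTranspose_mul, ha.1.eq, hb.1.eq,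
      ← hbb]
    simp only [mul_assoc]
  have hab : a * b = C := hC.eq_of_mul_conjTranspose_eq_mul_self_of_trace_eq hYC htr
  have hcomm : Commute a b := by
    rw [Commute, SemiconjBy, hab, ← hC.1.eq, ← hab, conjTranspose_mul, ha.1.eq, hb.1.eq]
  rw [← haa, ← hbb]
  exact ((hcomm.mul_right hcomm).mul_left (hcomm.mul_right hcomm)).eq
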